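/- If the language of an upward-compatible LTS W with upward-closed final set F is empty, then the complement of the set of configurations backward-reachable from F is the greatest inductive invariant of W, and the downward closure of the reachability set is the least inductive invariant. -/
import Mathlib


/-- `Reaches T s w t`: configuration `s` reaches `t` along the word `w`. -/
inductive Reaches {S A : Type*} (T : S → A → S → Prop) : S → List A → S → Prop where
  | nil (s : S) : Reaches T s [] s
  | cons {s r t : S} {a : A} {w : List A} :
      T s a r → Reaches T r w t → Reaches T s (a :: w) t

/-- Inductive invariant of a ULTS. -/
def IsInductiveInvariant {S A : Type*} (T : S → A → S → Prop) (pre : S → S → Prop)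
    (I F : Set S) (X : Set S) : Prop :=
  (∀ ⦃x y⦄, x ∈ X → pre y x → y ∈ X) ∧
  I ⊆ X ∧
  F ∩ X = ∅ ∧
  (∀ (a : A) (s s' : S), s ∈ X → T s a s' → s' ∈ X)

private lemma Reaches.sim {S A : Type*} {T : S → A → S → Prop} {pre : S → S → Prop}
    (hcompat : ∀ ⦃s s' r : S⦄ ⦃a : A⦄, pre s s' → T s a r → ∃ r', T s' a r' ∧ pre r r')
    {s t : S} {w : List A} (h : Reaches T s w t) :
    ∀ s', pre s s' → ∃ t', Reaches T s' w t' ∧ pre t t' := by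
  induction h with
  | nil s => exact fun s' hp => ⟨s', Reaches.nil s', hp⟩
  | cons hT _ ih =>
    intro s' hp
    obtain ⟨r', hT', hpr⟩ := hcompat hp hT
    obtain ⟨t', hR', hpt⟩ := ih r' hpr
    exact ⟨t', Reaches.cons hT' hR', hpt⟩

private lemma Reaches.snoc {S A : Type*} {T : S → A → S → Prop}
    {s t t' : S} {w : List A} {a : A} (h : Reaches T s w t) (hT : T t a t') :
    Reaches T s (w ++ [a]) t' := by
  induction h with
  | nil s => exact Reaches.cons hT (Reaches.nil t')
  | cons hT0 _ ih => exact Reaches.cons hT0 (ih hT)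

private lemma Reaches.inv {S A : Type*} {T : S → A → S → Prop} {pre : S → S → Prop}
    {I F X : Set S} (hX : IsInductiveInvariant T pre I F X)
    {s t : S} {w : List A} (h : Reaches T s w t) (hs : s ∈ X) : t ∈ X := by
  induction h with
  | nil s => exact hs
  | cons hT _ ih => exact ih (hX.2.2.2 _ _ _ hs hT)

/-- If the language of an upward-compatible LTS is empty, the complement of the
backward-reachable set is the greatest inductive invariant, and the downward
closure of the reachability set is the least inductive invariant. -/
theorem greatest_and_least_inductive_invariants
    {S A : Type*} (T : S → A → S → Prop) (pre : S → S → Prop)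
    (I F : Set S)
    (hrefl : Reflexive pre) (htrans : Transitive pre)
    (hcompat : ∀ ⦃s s' r : S⦄ ⦃a : A⦄, pre s s' → T s a r →
      ∃ r', T s' a r' ∧ pre r r')
    (hFup : ∀ ⦃f f'⦄, f ∈ F → pre f f' → f' ∈ F)
    (hempty : ¬ ∃ w : List A, ∃ i ∈ I, ∃ f ∈ F, Reaches T i w f) :
    (IsInductiveInvariant T pre I F {s | ∃ w : List A, ∃ f ∈ F, Reaches T s w f}ᶜ ∧
      ∀ X : Set S, IsInductiveInvariant T pre I F X →
        X ⊆ {s | ∃ w : List A, ∃ f ∈ F, Reaches T s w f}ᶜ) ∧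
    (IsInductiveInvariant T pre I F
        {s | ∃ t, (∃ w : List A, ∃ i ∈ I, Reaches T i w t) ∧ pre s t} ∧
      ∀ X : Set S, IsInductiveInvariant T pre I F X →
        {s | ∃ t, (∃ w : List A, ∃ i ∈ I, Reaches T i w t) ∧ pre s t} ⊆ X) := by
  constructor
  · constructor
    · refine ⟨?_, ?_, ?_, ?_⟩
      · intro x y hx hp hy
        obtain ⟨w, f, hf, hR⟩ := hy
        obtain ⟨f', hR', hpf⟩ := Reaches.sim hcompat hR x hp
        exact hx ⟨w, f', hFup hf hpf, hR'⟩
      · intro i hi hB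
        obtain ⟨w, f, hf, hR⟩ := hB
        exact hempty ⟨w, i, hi, f, hf, hR⟩
      · ext f
        simp only [Set.mem_inter_iff, Set.mem_empty_iff_false, iff_false, not_and]
        intro hf hB
        exact hB ⟨[], f, hf, Reaches.nil f⟩
      · intro a s s' hs hT hB
        obtain ⟨w, f, hf, hR⟩ := hB
        exact hs ⟨a :: w, f, hf, Reaches.cons hT hR⟩
    · intro X hX x hx hB
      obtain ⟨w, f, hf, hR⟩ := hB
      have hfX := Reaches.inv hX hR hx
      have := hX.2.2.1
      exact absurd (Set.eq_empty_iff_forall_notMem.mp this f ⟨hf, hfX⟩) id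
  · constructor
    · refine ⟨?_, ?_, ?_, ?_⟩
      · rintro x y ⟨t, ht, hp⟩ hp'
        exact ⟨t, ht, htrans hp' hp⟩
      · intro i hi
        exact ⟨i, ⟨[], i, hi, Reaches.nil i⟩, hrefl i⟩
      · ext f
        simp only [Set.mem_inter_iff, Set.mem_empty_iff_false, iff_false, not_and]
        rintro hf ⟨t, ⟨w, i, hi, hR⟩, hp⟩
        exact hempty ⟨w, i, hi, t, hFup hf hp, hR⟩
      · rintro a s s' ⟨t, ⟨w, i, hi, hR⟩, hp⟩ hT
        obtain ⟨t', hT', hp'⟩ := hcompat hp hT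
        exact ⟨t', ⟨w ++ [a], i, hi, Reaches.snoc hR hT'⟩, hp'⟩
    · rintro X hX s ⟨t, ⟨w, i, hi, hR⟩, hp⟩
      exact hX.1 (Reaches.inv hX hR (hX.2.1 hi)) hp
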